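/- Let α, β, γ ∈ ℝ, q ∈ [-1,1], z ∈ ℝ, and in the algebra Q set S(z) = R + z(D - Q'), where R = (W_1 + γD_q)W_2 + αD_q² and Q' = (1-q)D_qW_2 - βD_q², with W_1 = E + βD_qFD_q, W_2 = E + βFD_q², W_3 = E + qβFD_q². Then D_q W_1^{-1} S(z) F W_2 W_3 = R + q S(z) F D_q W_2. -/
import Mathlib


open Polynomial

noncomputable section

/-- The underlying set of the algebra `Q`: infinite sequences of real polynomials. -/
abbrev PolySeq : Type := ℕ → Polynomial ℝ

/-- Multiplication in the algebra `Q`: `(qmul P Q)_k = ∑_{j ≤ deg Q_k} [Q_k]_j • P_j`. -/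
def qmul (P Q : PolySeq) : PolySeq := fun k => (Q k).sum fun j c => c • P j

/-- The identity `E = (1, x, x², …)`. -/
def Eseq : PolySeq := fun n => X ^ n

/-- `D = (0, 1, x, x², …)`. -/
def Dseq : PolySeq := fun n => if n = 0 then 0 else X ^ (n - 1)

/-- `F = (x, x², x³, …)`. -/
def Fseq : PolySeq := fun n => X ^ (n + 1)

/-- Powers in the algebra `Q`. -/
def qpow (P : PolySeq) : ℕ → PolySeq
  | 0 => Eseq
  | k + 1 => qmul P (qpow P k)

/-- The `q`-number `[n]_q = 1 + q + … + q^{n-1}`, with `[0]_q = 0`. -/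
def qnum (q : ℝ) (n : ℕ) : ℝ := ∑ i ∈ Finset.range n, q ^ i

/-- The q-derivative element `D_q = ([0]_q, [1]_q, [2]_q x, [3]_q x², …)`. -/
def Dq (q : ℝ) : PolySeq := fun n => C (qnum q n) * X ^ (n - 1)

/-- `D_q²`. -/
def Dq2 (q : ℝ) : PolySeq := qmul (Dq q) (Dq q)

/-- `W₁ = E + β D_q F D_q`. -/
def W1 (β q : ℝ) : PolySeq := Eseq + β • qmul (qmul (Dq q) Fseq) (Dq q)

/-- `W₂ = E + β F D_q²`. -/
def W2 (β q : ℝ) : PolySeq := Eseq + β • qmul Fseq (Dq2 q)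

/-- `W₃ = E + qβ F D_q²`. -/
def W3 (β q : ℝ) : PolySeq := Eseq + (q * β) • qmul Fseq (Dq2 q)

/-- `W₄ = E + β D_q² F`. -/
def W4 (β q : ℝ) : PolySeq := Eseq + β • qmul (Dq2 q) Fseq

/-- `R = (W₁ + γ D_q) W₂ + α D_q²`. -/
def RelQ (α β γ q : ℝ) : PolySeq := qmul (W1 β q + γ • Dq q) (W2 β q) + α • Dq2 q

/-- `Q' = (1-q) D_q W₂ - β D_q²`. -/
def Qel (β q : ℝ) : PolySeq := (1 - q) • qmul (Dq q) (W2 β q) - β • Dq2 q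

/-- `S(z) = R + z (D - Q')`. -/
def Sel (α β γ q z : ℝ) : PolySeq := RelQ α β γ q + z • (Dseq - Qel β q)

def lap (P : PolySeq) : Polynomial ℝ →ₗ[ℝ] Polynomial ℝ where
  toFun p := p.sum fun j c => c • P j
  map_add' p q := Polynomial.sum_add_index p q _ (fun i => zero_smul ℝ (P i))
    (fun a b₁ b₂ => add_smul b₁ b₂ (P a))
  map_smul' s p := by
    simp only [RingHom.id_apply]
    refine (Polynomial.sum_smul_index p s _ (fun i => zero_smul ℝ (P i))).trans ?_
    simp only [Polynomial.sum, mul_smul, Finset.smul_sum]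

lemma lap_apply (P : PolySeq) (p : Polynomial ℝ) : lap P p = p.sum fun j c => c • P j := rfl

lemma lap_monomial (P : PolySeq) (n : ℕ) (c : ℝ) : lap P (monomial n c) = c • P n := by
  rw [lap_apply]; exact Polynomial.sum_monomial_index c _ (zero_smul ℝ (P n))

lemma lap_X_pow (P : PolySeq) (n : ℕ) : lap P (X ^ n) = P n := by
  rw [Polynomial.X_pow_eq_monomial, lap_monomial, one_smul]

lemma qmul_apply (P Q : PolySeq) (k : ℕ) : qmul P Q k = lap P (Q k) := rfl

lemma lap_qmul (P Q : PolySeq) : lap (qmul P Q) = lap P * lap Q := by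
  apply Polynomial.lhom_ext'
  intro n
  apply LinearMap.ext; intro a
  simp only [LinearMap.comp_apply, Module.End.mul_apply, lap_monomial, map_smul, qmul_apply]


lemma lap_one : lap Eseq = 1 := by
  apply Polynomial.lhom_ext'
  intro n
  apply LinearMap.ext; intro a
  simp only [LinearMap.comp_apply, lap_monomial, Module.End.one_apply, Eseq,
    Polynomial.smul_eq_C_mul, Polynomial.C_mul_X_pow_eq_monomial]

lemma lap_add (P Q : PolySeq) : lap (P + Q) = lap P + lap Q := by
  apply Polynomial.lhom_ext'
  intro n
  apply LinearMap.ext; intro a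
  simp only [LinearMap.comp_apply, lap_monomial, LinearMap.add_apply, Pi.add_apply, smul_add]

lemma lap_smul (c : ℝ) (P : PolySeq) : lap (c • P) = c • lap P := by
  apply Polynomial.lhom_ext'
  intro n
  apply LinearMap.ext; intro a
  simp only [LinearMap.comp_apply, lap_monomial, LinearMap.smul_apply, Pi.smul_apply,
    smul_comm a c]

lemma lap_sub (P Q : PolySeq) : lap (P - Q) = lap P - lap Q := by
  apply Polynomial.lhom_ext'
  intro n
  apply LinearMap.ext; intro a
  simp only [LinearMap.comp_apply, lap_monomial, LinearMap.sub_apply, Pi.sub_apply, smul_sub]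

lemma lap_inj {P Q : PolySeq} (h : lap P = lap Q) : P = Q := by
  funext n
  rw [← lap_X_pow P n, ← lap_X_pow Q n, h]

lemma qnum_succ (q : ℝ) (n : ℕ) : qnum q (n + 1) = q * qnum q n + 1 := by
  simp only [qnum]; exact geom_sum_succ

lemma rel1 : qmul Dseq Fseq = Eseq := by
  funext k
  rw [qmul_apply, Fseq, lap_X_pow, Dseq, Eseq]
  simp

lemma qmulFDq (q : ℝ) (k : ℕ) : qmul Fseq (Dq q) k = qnum q k • X ^ k := by
  rw [qmul_apply, Dq, ← Polynomial.smul_eq_C_mul, map_smul, lap_X_pow, Fseq, Polynomial.smul_eq_C_mul, Polynomial.smul_eq_C_mul]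
  cases k with
  | zero => simp [qnum]
  | succ n => rfl

lemma rel2 (q : ℝ) : qmul (Dq q) Fseq = q • qmul Fseq (Dq q) + Eseq := by
  funext k
  rw [Pi.add_apply, Pi.smul_apply, qmul_apply, Fseq, lap_X_pow, Dq, qmulFDq, Eseq]
  have : k + 1 - 1 = k := rfl
  rw [this, qnum_succ, ← Polynomial.smul_eq_C_mul, add_smul, one_smul, smul_smul]
set_option maxHeartbeats 4000000
section Key
variable {L : Type*} [Ring L] [Algebra ℝ L]

def Mexpr (q β γ α z : ℝ) (f dq : L) : L :=
  (γ + q*z) • ((1:L))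
  + (α + q*α + q*β*z) • (dq)
  + (q*β*α + q*β^2*z) • (dq*(dq))
  + (1) • (f)
  + (β + (-1)*q*z + q*γ + q*β + q^2*z) • (f*(dq))
  + (β*γ + β^2 + (-1)*q*β*z + 2*q*β*γ + 2*q*β^2 + q^2*α + 2*q^2*β*z + q^2*β*γ + q^2*β^2 + q^3*β*z) • (f*(dq*(dq)))
  + ((-1)*q*β^2*z + q*β^2*γ + q*β^3 + 2*q^2*β*α + q^2*β^2*z + 2*q^2*β^2*γ + 2*q^2*β^3 + q^3*β*α + 2*q^3*β^2*z + q^3*β^2*γ + q^3*β^3 + q^4*β^2*z) • (f*(dq*(dq*(dq))))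
  + (β + q*β + q^2*β) • (f*(f*(dq*(dq))))
  + (2*q*β^2 + (-1)*q^2*β*z + q^2*β*γ + 4*q^2*β^2 + q^3*β*γ + 3*q^3*β^2 + q^4*β*z + q^4*β^2) • (f*(f*(dq*(dq*(dq)))))
  + (q^2*β^3 + (-2)*q^3*β^2*z + 2*q^3*β^2*γ + 4*q^3*β^3 + q^4*β*α + q^4*β^2*z + 2*q^4*β^2*γ + 5*q^4*β^3 + q^5*β^2*z + q^5*β^2*γ + 3*q^5*β^3 + q^6*β^2*z + q^6*β^3) • (f*(f*(dq*(dq*(dq*(dq))))))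
  + (q^3*β^2 + q^4*β^2 + q^5*β^2) • (f*(f*(f*(dq*(dq*(dq*(dq)))))))
  + (2*q^5*β^3 + (-1)*q^6*β^2*z + q^6*β^2*γ + 3*q^6*β^3 + q^7*β^2*z + 2*q^7*β^3 + q^8*β^3) • (f*(f*(f*(dq*(dq*(dq*(dq*(dq))))))))
  + (q^9*β^3) • (f*(f*(f*(f*(dq*(dq*(dq*(dq*(dq*(dq))))))))))

lemma cert1 (q β γ α z : ℝ) (f dq d : L) (hdf : d * f = 1)
    (hdqf : dq * f = q • (f * dq) + 1) :
    ((1 + β • (dq * f * dq) + γ • dq) * (1 + β • (f * (dq * dq))) + α • (dq * dq)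
        + z • (d - ((1 - q) • (dq * (1 + β • (f * (dq * dq)))) - β • (dq * dq))))
      * (f * ((1 + β • (f * (dq * dq))) * (1 + (q * β) • (f * (dq * dq)))))
    = (1 + β • (dq * f * dq)) * Mexpr q β γ α z f dq := by
  have hdqf' : ∀ x : L, dq * (f * x) = q • (f * (dq * x)) + x := fun x => by
    rw [← mul_assoc, hdqf, add_mul, smul_mul_assoc, mul_assoc, one_mul]
  have hdf' : ∀ x : L, d * (f * x) = x := fun x => by
    rw [← mul_assoc, hdf, one_mul]
  simp only [Mexpr, mul_add, add_mul, mul_sub, sub_mul, smul_add, smul_sub, mul_smul_comm,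
    smul_mul_assoc, smul_smul, mul_one, one_mul, mul_assoc, hdqf', hdqf, hdf', hdf]
  module



lemma cert2 {L : Type*} [Ring L] [Algebra ℝ L] (q β γ α z : ℝ) (f dq d : L) (hdf : d * f = 1)
    (hdqf : dq * f = q • (f * dq) + 1) :
    dq * Mexpr q β γ α z f dq
    = ((1 + β • (dq * f * dq) + γ • dq) * (1 + β • (f * (dq * dq))) + α • (dq * dq))
      + q • ((((1 + β • (dq * f * dq) + γ • dq) * (1 + β • (f * (dq * dq))) + α • (dq * dq))
          + z • (d - ((1 - q) • (dq * (1 + β • (f * (dq * dq)))) - β • (dq * dq))))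
        * (f * (dq * (1 + β • (f * (dq * dq)))))) := by
  have hdqf' : ∀ x : L, dq * (f * x) = q • (f * (dq * x)) + x := fun x => by
    rw [← mul_assoc, hdqf, add_mul, smul_mul_assoc, mul_assoc, one_mul]
  have hdf' : ∀ x : L, d * (f * x) = x := fun x => by
    rw [← mul_assoc, hdf, one_mul]
  simp only [Mexpr, mul_add, add_mul, mul_sub, sub_mul, smul_add, smul_sub, mul_smul_comm,
    smul_mul_assoc, smul_smul, mul_one, one_mul, mul_assoc, hdqf', hdqf, hdf', hdf]
  module

lemma key {L : Type*} [Ring L] [Algebra ℝ L] (q β γ α z : ℝ) (f dq d w : L)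
    (hdf : d * f = 1) (hdqf : dq * f = q • (f * dq) + 1)
    (hw : w * (1 + β • (dq * f * dq)) = 1) :
    dq * w * ((1 + β • (dq * f * dq) + γ • dq) * (1 + β • (f * (dq * dq))) + α • (dq * dq)
        + z • (d - ((1 - q) • (dq * (1 + β • (f * (dq * dq)))) - β • (dq * dq))))
      * f * (1 + β • (f * (dq * dq))) * (1 + (q * β) • (f * (dq * dq)))
    = ((1 + β • (dq * f * dq) + γ • dq) * (1 + β • (f * (dq * dq))) + α • (dq * dq))
      + q • (((1 + β • (dq * f * dq) + γ • dq) * (1 + β • (f * (dq * dq))) + α • (dq * dq)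
          + z • (d - ((1 - q) • (dq * (1 + β • (f * (dq * dq)))) - β • (dq * dq))))
        * f * dq * (1 + β • (f * (dq * dq)))) := by
  have c1 := cert1 q β γ α z f dq d hdf hdqf
  have c2 := cert2 q β γ α z f dq d hdf hdqf
  have e1 : dq * w * ((1 + β • (dq * f * dq) + γ • dq) * (1 + β • (f * (dq * dq))) + α • (dq * dq)
        + z • (d - ((1 - q) • (dq * (1 + β • (f * (dq * dq)))) - β • (dq * dq))))
      * f * (1 + β • (f * (dq * dq))) * (1 + (q * β) • (f * (dq * dq)))
      = dq * (w * (((1 + β • (dq * f * dq) + γ • dq) * (1 + β • (f * (dq * dq))) + α • (dq * dq)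
        + z • (d - ((1 - q) • (dq * (1 + β • (f * (dq * dq)))) - β • (dq * dq))))
      * (f * ((1 + β • (f * (dq * dq))) * (1 + (q * β) • (f * (dq * dq))))))) := by
    simp only [mul_assoc]
  rw [e1, c1, ← mul_assoc w, hw, one_mul, c2]
  simp only [mul_assoc]

end Key

/-- `D_q W₁⁻¹ S(z) F W₂ W₃ = R + q S(z) F D_q W₂`. -/
theorem stmt17 (α β γ q z : ℝ) (hq : q ∈ Set.Icc (-1 : ℝ) 1)
    (W1inv : PolySeq) (h1 : qmul (W1 β q) W1inv = Eseq) (h2 : qmul W1inv (W1 β q) = Eseq) :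
    qmul (qmul (qmul (qmul (qmul (Dq q) W1inv) (Sel α β γ q z)) Fseq) (W2 β q)) (W3 β q) =
      RelQ α β γ q + q • qmul (qmul (qmul (Sel α β γ q z) Fseq) (Dq q)) (W2 β q) := by
  apply lap_inj
  have hdf : lap Dseq * lap Fseq = 1 := by rw [← lap_qmul, rel1, lap_one]
  have hdqf : lap (Dq q) * lap Fseq = q • (lap Fseq * lap (Dq q)) + 1 := by
    rw [← lap_qmul, rel2, lap_add, lap_smul, lap_qmul, lap_one]
  have hw : lap W1inv * (1 + β • (lap (Dq q) * lap Fseq * lap (Dq q))) = 1 := by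
    have h2' := congrArg lap h2
    rw [W1] at h2'
    rw [lap_qmul, lap_add, lap_smul, lap_qmul, lap_qmul, lap_one] at h2'
    exact h2'
  have main := key q β γ α z (lap Fseq) (lap (Dq q)) (lap Dseq) (lap W1inv) hdf hdqf hw
  simp only [Sel, RelQ, Qel, W2, W3, W1, Dq2, lap_qmul, lap_add, lap_smul, lap_sub, lap_one]
  exact main
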